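/- Define E_KKA : ℝ → ℝ by E_KKA(θ) = (36/37)(12−θ)² + (1/2)(2+θ)² + (121/122)(2−θ)² + (16/17)(8−θ)² for θ ≤ 2; E_KKA(θ) = (36/37)(12−θ)² + (1/2)(2+θ)² + (1/2)(2−θ)² + (16/17)(8−θ)² for 2 < θ ≤ 8; and E_KKA(θ) = (36/37)(12−θ)² + (1/2)(2+θ)² + (1/2)(2−θ)² + (36/37)(8−θ)² for θ > 8. Then E_KKA attains a unique minimum over the interval [0,10] at θ* = 12080/1833; in particular, the minimizer satisfies θ* ≠ 10. -/

import Mathlib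

/-!
Every branch of `EKKA` is the quadratic of the middle branch plus a nonnegative multiple of a
square: below `2` the coefficient of `(2 - θ)²` rises from `1/2` to `121/122`, above `8` that of
`(8 - θ)²` rises from `16/17` to `36/37`. So `EKKA` dominates the middle quadratic, with equality
on `[2, 8]`. That quadratic has leading coefficient `36/37 + 1 + 16/17 = 1833/629` and vertex
`12080/1833 ∈ [2, 8]`, which is therefore the strict global minimiser of `EKKA`.
-/

open Set

noncomputable section

/-- The population slack objective `4·E(‖ε_i‖²)` of the KKA heuristic in the
counterexample of Proposition 1. -/
def EKKA : ℝ → ℝ := fun θ =>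
  if θ ≤ 2 then
    (36 / 37) * (12 - θ) ^ 2 + (1 / 2) * (2 + θ) ^ 2 + (121 / 122) * (2 - θ) ^ 2 +
      (16 / 17) * (8 - θ) ^ 2
  else if θ ≤ 8 then
    (36 / 37) * (12 - θ) ^ 2 + (1 / 2) * (2 + θ) ^ 2 + (1 / 2) * (2 - θ) ^ 2 +
      (16 / 17) * (8 - θ) ^ 2
  else
    (36 / 37) * (12 - θ) ^ 2 + (1 / 2) * (2 + θ) ^ 2 + (1 / 2) * (2 - θ) ^ 2 +
      (36 / 37) * (8 - θ) ^ 2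

def EKKAMiddle (θ : ℝ) : ℝ :=
  (36 / 37) * (12 - θ) ^ 2 + (1 / 2) * (2 + θ) ^ 2 + (1 / 2) * (2 - θ) ^ 2 +
    (16 / 17) * (8 - θ) ^ 2

lemma EKKAMiddle_eq_vertex_form (θ : ℝ) :
    EKKAMiddle θ = EKKAMiddle (12080 / 1833) + 1833 / 629 * (θ - 12080 / 1833) ^ 2 := by
  unfold EKKAMiddle
  ring

lemma EKKAMiddle_lt_of_ne {θ : ℝ} (hθ : θ ≠ 12080 / 1833) :
    EKKAMiddle (12080 / 1833) < EKKAMiddle θ := by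
  have hsq : 0 < (θ - 12080 / 1833) ^ 2 := sq_pos_of_ne_zero (sub_ne_zero.mpr hθ)
  rw [EKKAMiddle_eq_vertex_form θ]
  linarith

lemma EKKAMiddle_le_EKKA (θ : ℝ) : EKKAMiddle θ ≤ EKKA θ := by
  unfold EKKA EKKAMiddle
  split_ifs
  · nlinarith [sq_nonneg (2 - θ)]
  · rfl
  · nlinarith [sq_nonneg (8 - θ)]

lemma EKKA_eq_EKKAMiddle {θ : ℝ} (hθ : θ ∈ Icc (2 : ℝ) 8) : EKKA θ = EKKAMiddle θ := by
  obtain ⟨h2, h8⟩ := hθ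
  rcases h2.eq_or_lt with rfl | h2
  · norm_num [EKKA, EKKAMiddle]
  · simp only [EKKA, EKKAMiddle, if_neg h2.not_ge, if_pos h8]

/-- In the counterexample showing that KKA is not estimation consistent, the
objective `E_KKA` attains a unique minimum over `[0,10]` at `θ* = 12080/1833 ≠ 10`. -/
theorem statement18 :
    (12080 / 1833 : ℝ) ∈ Icc (0 : ℝ) 10 ∧
    (∀ θ ∈ Icc (0 : ℝ) 10, θ ≠ 12080 / 1833 → EKKA (12080 / 1833) < EKKA θ) ∧
    (12080 / 1833 : ℝ) ≠ 10 := by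
  refine ⟨by norm_num, fun θ _ hθ => ?_, by norm_num⟩
  calc EKKA (12080 / 1833) = EKKAMiddle (12080 / 1833) := EKKA_eq_EKKAMiddle (by norm_num)
    _ < EKKAMiddle θ := EKKAMiddle_lt_of_ne hθ
    _ ≤ EKKA θ := EKKAMiddle_le_EKKA θ
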